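/- Let p ≥ 3 be a prime and let μ be a probability distribution on F_p. Call a random variable X taking values in F_p ε-almost-uniform if |Pr[X = z] − 1/p| ≤ ε for all z ∈ F_p. Suppose μ is supported on more than one value. Then for any ε > 0, there exists Q ∈ ℕ such that for every n and every vector h ∈ F_p^n with at least Q nonzero entries, if x ∈ F_p^n is a random vector with independent μ-distributed entries, then the inner product h·x = Σ_{i=1}^n h_i x_i is ε-almost-uniform. -/

import Mathlib

/-!
Write `μ̂ = 𝓕 μ` for the discrete Fourier transform on `ZMod p`. The transform of the law of
`h · x` at `k` factors as `∏ i, μ̂ (h i * k)`. Because `μ` charges two distinct points, strict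
convexity of `ℂ` gives `‖μ̂ s‖ < 1` for every `s ≠ 0`, hence a uniform bound `ρ < 1`. Each nonzero
`h i` then contributes a factor of norm at most `ρ` to every nontrivial coefficient of the law, and
Fourier inversion turns this into `|Pr[h · x = z] - 1/p| ≤ ρ ^ Q`.
-/

open Finset

lemma AddChar.map_sum_eq_prod {ι A M : Type*} [AddCommMonoid A] [CommMonoid M]
    (ψ : AddChar A M) (s : Finset ι) (f : ι → A) : ψ (∑ i ∈ s, f i) = ∏ i ∈ s, ψ (f i) := by
  induction s using Finset.cons_induction with
  | empty => simp
  | cons a s _ ih => rw [sum_cons, prod_cons, ψ.map_add_eq_mul, ih]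

noncomputable def linearFormLaw {ι R : Type*} [Fintype ι] [DecidableEq ι] [CommSemiring R]
    [Fintype R] [DecidableEq R] (μ : R → ℝ) (h : ι → R) (z : R) : ℝ :=
  ∑ x ∈ univ.filter (fun x : ι → R => ∑ i, h i * x i = z), ∏ i, μ (x i)

namespace ZMod

section

variable {N : ℕ} [NeZero N]

lemma dft_linearFormLaw {ι : Type*} [Fintype ι] [DecidableEq ι] (μ : ZMod N → ℝ)
    (h : ι → ZMod N) (k : ZMod N) :
    𝓕 (fun z => (linearFormLaw μ h z : ℂ)) k = ∏ i, 𝓕 (fun a => (μ a : ℂ)) (h i * k) := by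
  set g : (ι → ZMod N) → ZMod N := fun x => ∑ i, h i * x i
  calc 𝓕 (fun z => (linearFormLaw μ h z : ℂ)) k
      = ∑ j, ∑ x ∈ univ.filter (g · = j), stdAddChar (-(j * k)) * ∏ i, (μ (x i) : ℂ) := by
        simp only [dft_apply, linearFormLaw, smul_eq_mul, Complex.ofReal_sum,
          Complex.ofReal_prod, mul_sum, g]
    _ = ∑ j, ∑ x ∈ univ.filter (g · = j), stdAddChar (-(g x * k)) * ∏ i, (μ (x i) : ℂ) :=
        sum_congr rfl fun j _ => sum_congr rfl fun x hx => by rw [(mem_filter.1 hx).2]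
    _ = ∑ x, stdAddChar (-(g x * k)) * ∏ i, (μ (x i) : ℂ) := sum_fiberwise _ _ _
    _ = ∑ x : ι → ZMod N, ∏ i, stdAddChar (-(x i * (h i * k))) * (μ (x i) : ℂ) := by
        refine sum_congr rfl fun x _ => ?_
        rw [prod_mul_distrib, ← AddChar.map_sum_eq_prod]
        congr 2
        simp only [g, sum_mul, ← sum_neg_distrib]
        exact sum_congr rfl fun i _ => by ring
    _ = ∏ i, 𝓕 (fun a => (μ a : ℂ)) (h i * k) := by
        simp only [dft_apply, smul_eq_mul]
        exact (Fintype.prod_sum fun i a => stdAddChar (-(a * (h i * k))) * (μ a : ℂ)).symm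

lemma norm_sub_inv_le_of_norm_dft_le {Φ : ZMod N → ℂ} {δ : ℝ} (hδ0 : 0 ≤ δ) (h0 : 𝓕 Φ 0 = 1)
    (hδ : ∀ k ≠ 0, ‖𝓕 Φ k‖ ≤ δ) (z : ZMod N) : ‖Φ z - (N : ℂ)⁻¹‖ ≤ δ := by
  have hN : (0 : ℝ) < N := by exact_mod_cast Nat.pos_of_neZero N
  have hinv : Φ z = (N : ℂ)⁻¹ * ∑ k, stdAddChar (k * z) * 𝓕 Φ k := by
    simpa only [LinearEquiv.symm_apply_apply, smul_eq_mul] using invDFT_apply (𝓕 Φ) z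
  rw [hinv, ← add_sum_erase _ _ (mem_univ 0), zero_mul, AddChar.map_zero_eq_one, h0, one_mul,
    mul_add, mul_one, add_sub_cancel_left, norm_mul, norm_inv, Complex.norm_natCast]
  calc (N : ℝ)⁻¹ * ‖∑ k ∈ univ.erase 0, stdAddChar (k * z) * 𝓕 Φ k‖
      ≤ (N : ℝ)⁻¹ * ∑ k ∈ univ.erase (0 : ZMod N), δ := by
        gcongr
        refine (norm_sum_le _ _).trans (sum_le_sum fun k hk => ?_)
        rw [norm_mul, AddChar.norm_apply, one_mul]
        exact hδ k (ne_of_mem_erase hk)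
    _ ≤ (N : ℝ)⁻¹ * (N * δ) := by
        gcongr
        rw [sum_const, nsmul_eq_mul]
        gcongr
        exact_mod_cast card_erase_le.trans_eq (card_univ.trans (ZMod.card N))
    _ = δ := by field_simp

end

section

variable {p : ℕ} [Fact p.Prime] {μ : ZMod p → ℝ}

lemma norm_dft_lt_one (hμ0 : ∀ z, 0 ≤ μ z) (hμ1 : ∑ z, μ z = 1) {a b : ZMod p} (hab : a ≠ b)
    (ha : μ a ≠ 0) (hb : μ b ≠ 0) {k : ZMod p} (hk : k ≠ 0) :
    ‖𝓕 (fun z => (μ z : ℂ)) k‖ < 1 := by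
  have hψ : stdAddChar (-(a * k)) ≠ stdAddChar (-(b * k)) := by
    rw [injective_stdAddChar.ne_iff, neg_inj.ne]
    exact fun habk => hab (mul_right_cancel₀ hk habk)
  simp only [dft_apply, smul_eq_mul, mul_comm (stdAddChar _), ← Complex.real_smul]
  exact norm_sum_lt_of_strictConvexSpace (fun z _ => hμ0 z) hμ1 (mem_univ a) (mem_univ b) hψ
    ha hb fun z _ => (AddChar.norm_apply _ _).le

lemma exists_norm_dft_le_of_lt_one (hμ0 : ∀ z, 0 ≤ μ z) (hμ1 : ∑ z, μ z = 1)
    (hμsupp : ∃ a b : ZMod p, a ≠ b ∧ μ a ≠ 0 ∧ μ b ≠ 0) :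
    ∃ ρ : ℝ, 0 ≤ ρ ∧ ρ < 1 ∧ ∀ k ≠ 0, ‖𝓕 (fun z => (μ z : ℂ)) k‖ ≤ ρ := by
  obtain ⟨a, b, hab, ha, hb⟩ := hμsupp
  have hne : (univ.filter (· ≠ (0 : ZMod p))).Nonempty := ⟨1, by simp⟩
  have hle : ∀ k ≠ 0, ‖𝓕 (fun z => (μ z : ℂ)) k‖ ≤
      (univ.filter (· ≠ 0)).sup' hne fun k => ‖𝓕 (fun z => (μ z : ℂ)) k‖ := fun k hk =>
    le_sup' (fun k => ‖𝓕 (fun z => (μ z : ℂ)) k‖) (mem_filter.2 ⟨mem_univ k, hk⟩)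
  exact ⟨_, (norm_nonneg _).trans (hle 1 one_ne_zero),
    (sup'_lt_iff hne).2 fun k hk => norm_dft_lt_one hμ0 hμ1 hab ha hb (mem_filter.1 hk).2, hle⟩

variable {ι : Type*} [Fintype ι]

lemma norm_prod_dft_le_pow (hμ1 : ∑ z, μ z = 1) {ρ : ℝ}
    (hρ : ∀ k ≠ 0, ‖𝓕 (fun z => (μ z : ℂ)) k‖ ≤ ρ) (h : ι → ZMod p) {k : ZMod p} (hk : k ≠ 0) :
    ‖∏ i, 𝓕 (fun z => (μ z : ℂ)) (h i * k)‖ ≤ ρ ^ (univ.filter (h · ≠ 0)).card := by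
  have hzero : 𝓕 (fun z => (μ z : ℂ)) 0 = 1 := by
    rw [dft_apply_zero]; exact_mod_cast hμ1
  have hfilter : ∏ i ∈ univ.filter (h · ≠ 0), 𝓕 (fun z => (μ z : ℂ)) (h i * k) =
      ∏ i, 𝓕 (fun z => (μ z : ℂ)) (h i * k) :=
    prod_filter_of_ne fun i _ hi h0 => hi (by rw [h0, zero_mul, hzero])
  rw [← hfilter, norm_prod, ← prod_const]
  exact prod_le_prod (fun _ _ => norm_nonneg _) fun i hi =>
    hρ _ (mul_ne_zero (mem_filter.1 hi).2 hk)

lemma abs_linearFormLaw_sub_inv_le [DecidableEq ι] (hμ1 : ∑ z, μ z = 1) {ρ : ℝ} (hρ0 : 0 ≤ ρ)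
    (hρ : ∀ k ≠ 0, ‖𝓕 (fun z => (μ z : ℂ)) k‖ ≤ ρ) (h : ι → ZMod p) (z : ZMod p) :
    |linearFormLaw μ h z - 1 / p| ≤ ρ ^ (univ.filter (h · ≠ 0)).card := by
  have hzero : 𝓕 (fun z => (linearFormLaw μ h z : ℂ)) 0 = 1 := by
    rw [dft_linearFormLaw]
    simp only [mul_zero, dft_apply_zero]
    exact_mod_cast prod_eq_one fun _ _ => hμ1
  have hbound := norm_sub_inv_le_of_norm_dft_le (pow_nonneg hρ0 _) hzero
    (fun k hk => (dft_linearFormLaw μ h k).symm ▸ norm_prod_dft_le_pow hμ1 hρ h hk) z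
  rwa [← Complex.ofReal_natCast, ← Complex.ofReal_inv, ← Complex.ofReal_sub, Complex.norm_real,
    Real.norm_eq_abs, ← one_div] at hbound

end

end ZMod

open ZMod in
theorem inner_product_almost_uniform_general (p : ℕ) [Fact p.Prime]
    (μ : ZMod p → ℝ) (hμ0 : ∀ z, 0 ≤ μ z) (hμ1 : ∑ z, μ z = 1)
    (hμsupp : ∃ a b : ZMod p, a ≠ b ∧ μ a ≠ 0 ∧ μ b ≠ 0)
    (ε : ℝ) (hε : 0 < ε) :
    ∃ Q : ℕ, ∀ n : ℕ, ∀ h : Fin n → ZMod p,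
      Q ≤ (Finset.univ.filter (fun i => h i ≠ 0)).card →
      ∀ z : ZMod p,
        |(∑ x ∈ Finset.univ.filter (fun x : Fin n → ZMod p => ∑ i, h i * x i = z),
            ∏ i, μ (x i)) - 1 / (p : ℝ)| ≤ ε := by
  obtain ⟨ρ, hρ0, hρ1, hρ⟩ := exists_norm_dft_le_of_lt_one hμ0 hμ1 hμsupp
  obtain ⟨Q, hQ⟩ := exists_pow_lt_of_lt_one hε hρ1
  refine ⟨Q, fun n h hcard z => ?_⟩
  show |linearFormLaw μ h z - 1 / p| ≤ ε
  calc |linearFormLaw μ h z - 1 / p| ≤ ρ ^ (univ.filter (h · ≠ 0)).card :=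
        abs_linearFormLaw_sub_inv_le hμ1 hρ0 hρ h z
    _ ≤ ρ ^ Q := pow_le_pow_of_le_one hρ0 hρ1.le hcard
    _ ≤ ε := hQ.le

/-- For a prime `p ≥ 3`, a distribution `μ` on `F_p` supported on more than one value, and any
`ε > 0`, there is `Q ∈ ℕ` such that: for every `n` and every `h ∈ F_p^n` with at least `Q`
nonzero entries, if `x ∈ F_p^n` has independent `μ`-distributed entries then the inner product
`h · x` is `ε`-almost-uniform, i.e. `|Pr[h · x = z] - 1/p| ≤ ε` for all `z ∈ F_p`. -/
theorem inner_product_almost_uniform (p : ℕ) [Fact p.Prime] (hp3 : 3 ≤ p)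
    (μ : ZMod p → ℝ) (hμ0 : ∀ z, 0 ≤ μ z) (hμ1 : ∑ z, μ z = 1)
    (hμsupp : ∃ a b : ZMod p, a ≠ b ∧ μ a ≠ 0 ∧ μ b ≠ 0)
    (ε : ℝ) (hε : 0 < ε) :
    ∃ Q : ℕ, ∀ n : ℕ, ∀ h : Fin n → ZMod p,
      Q ≤ (Finset.univ.filter (fun i => h i ≠ 0)).card →
      ∀ z : ZMod p,
        |(∑ x ∈ Finset.univ.filter (fun x : Fin n → ZMod p => ∑ i, h i * x i = z),
            ∏ i, μ (x i)) - 1 / (p : ℝ)| ≤ ε :=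
  inner_product_almost_uniform_general p μ hμ0 hμ1 hμsupp ε hε
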